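/- arXiv:2210.00049 — 2 statements merged into one kernel-verified Lean document; each statement's English description precedes it below -/
import Mathlib

section
/- The marginal density m₁(z | τ²) of a N(λ,1) observation with λ ∼ J(0,τ²) equals (√a/τ³)·(2π)^{−1/2}·(a + a²z²)·exp(−z²/2 + a z²/2), where a = τ²/(1+τ²). In particular m₁ is a probability density on ℝ. -/
/-!
Completing the square in `λ`, the product `φ(z - λ) j(λ | 0, τ²)` is `λ²` times a Gaussian in
`λ` with mean `a z` and variance `a`, times the factor `exp (-(1 - a) z² / 2)`. The second moment
`a + a² z²` of that Gaussian gives the formula; integrating it in `z` is again a Gaussian moment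
computation, now with variance `1 / (1 - a) = 1 + τ²`.
-/

open Real MeasureTheory

section GaussianMoments

variable {b : ℝ}

theorem integrable_sq_mul_exp_neg_mul_sq (hb : 0 < b) :
    Integrable fun x : ℝ => x ^ 2 * exp (-b * x ^ 2) := by
  simpa [rpow_natCast] using integrable_rpow_mul_exp_neg_mul_sq hb (s := 2) (by norm_num)

theorem integrable_add_sq_mul_exp_neg_mul_sq (hb : 0 < b) (p q : ℝ) :
    Integrable fun x : ℝ => (p + q * x ^ 2) * exp (-b * x ^ 2) := by
  simp_rw [add_mul, mul_assoc]
  exact ((integrable_exp_neg_mul_sq hb).const_mul p).add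
    ((integrable_sq_mul_exp_neg_mul_sq hb).const_mul q)

theorem integral_mul_exp_neg_mul_sq_eq_zero (b : ℝ) :
    ∫ x : ℝ, x * exp (-b * x ^ 2) = 0 := by
  have h := integral_neg_eq_self (fun x : ℝ => x * exp (-b * x ^ 2)) volume
  simp only [neg_sq, neg_mul, integral_neg] at h ⊢
  linarith

/-- Integration by parts against the primitive `x * exp (-b * x ^ 2)`. -/
theorem integral_sq_mul_exp_neg_mul_sq (hb : 0 < b) :
    ∫ x : ℝ, x ^ 2 * exp (-b * x ^ 2) = √(π / b) / (2 * b) := by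
  have hderiv : ∀ x : ℝ, HasDerivAt (fun x => x * exp (-b * x ^ 2))
      (exp (-b * x ^ 2) - 2 * b * (x ^ 2 * exp (-b * x ^ 2))) x := fun x => by
    refine ((hasDerivAt_id' x).mul ((hasDerivAt_pow 2 x).const_mul (-b)).exp).congr_deriv ?_
    push_cast
    ring
  have hint := (integrable_sq_mul_exp_neg_mul_sq hb).const_mul (2 * b)
  have hzero := integral_eq_zero_of_hasDerivAt_of_integrable hderiv
    ((integrable_exp_neg_mul_sq hb).sub hint) (integrable_mul_exp_neg_mul_sq hb)
  rw [integral_sub (integrable_exp_neg_mul_sq hb) hint, integral_const_mul,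
    integral_gaussian] at hzero
  rw [eq_div_iff (by positivity)]
  linarith

theorem integral_add_sq_mul_exp_neg_mul_sq (hb : 0 < b) (p q : ℝ) :
    ∫ x : ℝ, (p + q * x ^ 2) * exp (-b * x ^ 2) = √(π / b) * (p + q / (2 * b)) := by
  simp_rw [add_mul, mul_assoc]
  rw [integral_add ((integrable_exp_neg_mul_sq hb).const_mul p)
      ((integrable_sq_mul_exp_neg_mul_sq hb).const_mul q),
    integral_const_mul, integral_const_mul, integral_gaussian, integral_sq_mul_exp_neg_mul_sq hb]
  ring

theorem integral_sq_mul_exp_neg_mul_sub_sq (hb : 0 < b) (c : ℝ) :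
    ∫ x : ℝ, x ^ 2 * exp (-b * (x - c) ^ 2) = √(π / b) * (c ^ 2 + 1 / (2 * b)) := by
  rw [← integral_add_right_eq_self _ c]
  have hexpand : ∀ x : ℝ, (x + c) ^ 2 * exp (-b * (x + c - c) ^ 2)
      = (c ^ 2 + 1 * x ^ 2) * exp (-b * x ^ 2) + 2 * c * (x * exp (-b * x ^ 2)) := fun x => by
    ring_nf
  simp_rw [hexpand]
  rw [integral_add (integrable_add_sq_mul_exp_neg_mul_sq hb _ _)
      ((integrable_mul_exp_neg_mul_sq hb).const_mul _),
    integral_add_sq_mul_exp_neg_mul_sq hb, integral_const_mul,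
    integral_mul_exp_neg_mul_sq_eq_zero]
  ring

end GaussianMoments

section NormalMomentPrior

variable {τ a : ℝ}

theorem normal_mul_normalMoment_eq (hτ : τ ≠ 0) (ha : a = τ ^ 2 / (1 + τ ^ 2)) (z l : ℝ) :
    (√(2 * π))⁻¹ * exp (-(z - l) ^ 2 / 2)
        * (l ^ 2 / (√(2 * π) * τ ^ 3) * exp (-l ^ 2 / (2 * τ ^ 2)))
      = (2 * π * τ ^ 3)⁻¹ * exp (-z ^ 2 / 2 + a * z ^ 2 / 2)
        * (l ^ 2 * exp (-(1 / (2 * a)) * (l - a * z) ^ 2)) := by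
  have hsquare : -(z - l) ^ 2 / 2 + -l ^ 2 / (2 * τ ^ 2)
      = (-z ^ 2 / 2 + a * z ^ 2 / 2) + -(1 / (2 * a)) * (l - a * z) ^ 2 := by
    subst ha
    field_simp
    ring
  have hexp : exp (-(z - l) ^ 2 / 2) * exp (-l ^ 2 / (2 * τ ^ 2))
      = exp (-z ^ 2 / 2 + a * z ^ 2 / 2) * exp (-(1 / (2 * a)) * (l - a * z) ^ 2) := by
    rw [← exp_add, ← exp_add, hsquare]
  have hsqrt : √(2 * π) * √(2 * π) = 2 * π := mul_self_sqrt (by positivity)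
  calc _ = (√(2 * π) * √(2 * π) * τ ^ 3)⁻¹ * l ^ 2
        * (exp (-(z - l) ^ 2 / 2) * exp (-l ^ 2 / (2 * τ ^ 2))) := by ring
    _ = _ := by rw [hexp, hsqrt]; ring

theorem integral_normal_mul_normalMoment (hτ : 0 < τ) (ha : a = τ ^ 2 / (1 + τ ^ 2)) (z : ℝ) :
    ∫ l : ℝ, (√(2 * π))⁻¹ * exp (-(z - l) ^ 2 / 2)
        * (l ^ 2 / (√(2 * π) * τ ^ 3) * exp (-l ^ 2 / (2 * τ ^ 2)))
      = (√a / τ ^ 3) * (√(2 * π))⁻¹ * (a + a ^ 2 * z ^ 2)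
        * exp (-z ^ 2 / 2 + a * z ^ 2 / 2) := by
  have ha0 : 0 < a := ha ▸ by positivity
  simp_rw [normal_mul_normalMoment_eq hτ.ne' ha z]
  rw [integral_const_mul, integral_sq_mul_exp_neg_mul_sub_sq (by positivity),
    show π / (1 / (2 * a)) = 2 * π * a by field_simp, sqrt_mul (by positivity)]
  have : √(2 * π) ≠ 0 := by positivity
  field_simp
  rw [sq_sqrt (by positivity)]
  ring

theorem integral_marginal_eq_one (hτ : 0 < τ) (ha : a = τ ^ 2 / (1 + τ ^ 2)) :
    ∫ z : ℝ, (√a / τ ^ 3) * (√(2 * π))⁻¹ * (a + a ^ 2 * z ^ 2)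
        * exp (-z ^ 2 / 2 + a * z ^ 2 / 2) = 1 := by
  have h1a : 1 - a = 1 / (1 + τ ^ 2) := by subst ha; field_simp; ring
  have hs : √a * √(1 + τ ^ 2) = τ := by
    rw [← sqrt_mul (ha ▸ by positivity), ha, div_mul_cancel₀ _ (by positivity),
      sqrt_sq hτ.le]
  have hexp : ∀ z : ℝ, -z ^ 2 / 2 + a * z ^ 2 / 2 = -((1 - a) / 2) * z ^ 2 := fun z => by ring
  simp_rw [hexp, mul_assoc _ (a + _), integral_const_mul]
  rw [integral_add_sq_mul_exp_neg_mul_sq (by rw [h1a]; positivity),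
    show π / ((1 - a) / 2) = 2 * π * (1 + τ ^ 2) by rw [h1a]; field_simp,
    sqrt_mul (by positivity : (0 : ℝ) ≤ 2 * π)]
  have hratio : a + a ^ 2 / (2 * ((1 - a) / 2)) = τ ^ 2 := by
    rw [mul_div_cancel₀ _ two_ne_zero, h1a, ha]
    field_simp
  have : √(2 * π) ≠ 0 := by positivity
  rw [hratio]
  field_simp
  exact hs

end NormalMomentPrior

theorem z_marginal_density_formula (τ : ℝ) (hτ : 0 < τ)
    (a : ℝ) (ha : a = τ^2 / (1 + τ^2))
    (m₁ : ℝ → ℝ)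
    (hm₁ : ∀ z, m₁ z = ∫ l : ℝ, (Real.sqrt (2*π))⁻¹ * Real.exp (-(z - l)^2 / 2) *
        (l^2 / (Real.sqrt (2*π) * τ^3) * Real.exp (-l^2 / (2*τ^2)))) :
    (∀ z, m₁ z = (Real.sqrt a / τ^3) * (Real.sqrt (2*π))⁻¹ * (a + a^2 * z^2) *
        Real.exp (-z^2/2 + a * z^2 / 2)) ∧
    (∫ z : ℝ, m₁ z) = 1 := by
  have hformula : ∀ z, m₁ z = (√a / τ ^ 3) * (√(2 * π))⁻¹ * (a + a ^ 2 * z ^ 2) *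
      exp (-z ^ 2 / 2 + a * z ^ 2 / 2) :=
    fun z => (hm₁ z).trans (integral_normal_mul_normalMoment hτ ha z)
  exact ⟨hformula, (integral_congr_ae (Filter.Eventually.of_forall hformula)).trans
    (integral_marginal_eq_one hτ ha)⟩
end

section
/- Let m₀(h) be the central chi-squared density on k degrees of freedom and let m₁(h | τ²) be the marginal density obtained by integrating the noncentral chi-squared density with k degrees of freedom and noncentrality λ against the Gamma(k/2 + 1, 1/(2τ²)) prior on λ. Then m₁(h | τ²)/m₀(h) = (τ²+1)^{−k/2−1} · (1 + τ² h/(k(τ²+1))) · exp(τ² h/(2(τ²+1))). -/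
/-!
Write the noncentral χ²_k(λ) density as the Poisson(λ/2) mixture of the central densities
χ²_{k+2i}. Integrating term by term against the Gamma(k/2 + 1, 1/(2τ²)) prior turns the Poisson
weights into negative binomial weights Γ(k/2+1+i)/(i! Γ(k/2+1)) p^(k/2+1) (1-p)^i with
p = 1/(τ²+1). Since χ²_{k+2i}(h) = χ²_k(h) (h/2)^i Γ(k/2)/Γ(k/2+i), the Gamma factors collapse to
(k/2+i)/(k/2), and with x = τ²h/(2(τ²+1)) the Bayes factor becomes
p^(k/2+1) ∑ (1 + 2i/k) xⁱ/i! = p^(k/2+1) (1 + 2x/k) eˣ.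
-/

open Real MeasureTheory Set ProbabilityTheory
open scoped Nat

theorem hasSum_add_mul_pow_div_factorial (a x : ℝ) :
    HasSum (fun n : ℕ => (a + n) * x ^ n / n !) ((a + x) * exp x) := by
  have hexp : HasSum (fun n : ℕ => x ^ n / n !) (exp x) := by
    rw [Real.exp_eq_exp_ℝ]
    exact NormedSpace.expSeries_div_hasSum_exp x
  have hmul : HasSum (fun n : ℕ => n * x ^ n / n !) (x * exp x) := by
    rw [← hasSum_nat_add_iff' 1, Finset.sum_range_one, Nat.cast_zero, zero_mul, zero_div,
      sub_zero]
    refine (hexp.mul_left x).congr_fun fun n => ?_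
    rw [Nat.factorial_succ, pow_succ]
    push_cast
    field_simp
  rw [add_mul]
  exact ((hexp.mul_left a).add hmul).congr_fun fun n => by ring

section PoissonGammaMixture

variable {α b c : ℝ}

lemma poisson_mul_gammaPDFReal_eqOn (i : ℕ) :
    EqOn (fun l => exp (-(c * l)) * (c * l) ^ i / i ! * gammaPDFReal α b l)
      (fun l => b ^ α * c ^ i / (i ! * Gamma α) * (l ^ (α + i - 1) * exp (-((b + c) * l))))
      (Ioi 0) := by
  intro l (hl : 0 < l)
  have hpow : l ^ (α + i - 1) = l ^ (α - 1) * l ^ i := by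
    rw [show α + i - 1 = α - 1 + i by ring, rpow_add hl, rpow_natCast]
  simp only [gammaPDFReal, if_pos hl.le, hpow, mul_pow, add_mul, neg_add, exp_add]
  ring

lemma integrableOn_poisson_mul_gammaPDFReal (hα : 0 < α) (hb : 0 < b) (hc : 0 ≤ c) (i : ℕ) :
    IntegrableOn (fun l => exp (-(c * l)) * (c * l) ^ i / i ! * gammaPDFReal α b l) (Ioi 0) := by
  refine IntegrableOn.congr_fun ?_ (poisson_mul_gammaPDFReal_eqOn i).symm measurableSet_Ioi
  have h := integrableOn_rpow_mul_exp_neg_mul_rpow (p := 1) (s := α + i - 1)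
    (by linarith [(Nat.cast_nonneg i : (0 : ℝ) ≤ i)]) one_pos (by linarith : 0 < b + c)
  simp only [rpow_one, neg_mul] at h
  exact h.const_mul _

/-- A Gamma(α, b) mixture of Poisson(c l) laws is negative binomial with parameters
`α` and `b / (b + c)`. -/
lemma integral_poisson_mul_gammaPDFReal (hα : 0 < α) (hb : 0 < b) (hc : 0 ≤ c) (i : ℕ) :
    ∫ l in Ioi 0, exp (-(c * l)) * (c * l) ^ i / i ! * gammaPDFReal α b l =
      Gamma (α + i) / (i ! * Gamma α) * (b / (b + c)) ^ α * (c / (b + c)) ^ i := by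
  have hbc : 0 < b + c := by linarith
  have hΓ : Gamma α ≠ 0 := (Gamma_pos_of_pos hα).ne'
  rw [setIntegral_congr_fun measurableSet_Ioi (poisson_mul_gammaPDFReal_eqOn i),
    integral_const_mul, integral_rpow_mul_exp_neg_mul_Ioi (by positivity) hbc,
    rpow_add (by positivity), rpow_natCast, div_rpow hb.le hbc.le, one_div, inv_rpow hbc.le]
  field_simp
  ring

theorem integral_tsum_poisson_mul_gammaPDFReal (hα : 0 < α) (hb : 0 < b) (hc : 0 ≤ c)
    {C : ℕ → ℝ} {s : ℝ} (hC : ∀ i, 0 ≤ C i)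
    (hs : HasSum (fun i : ℕ => C i *
      (Gamma (α + i) / (i ! * Gamma α) * (b / (b + c)) ^ α * (c / (b + c)) ^ i)) s) :
    ∫ l in Ioi 0, (∑' i : ℕ, exp (-(c * l)) * (c * l) ^ i / i ! * C i) * gammaPDFReal α b l
      = s := by
  set F : ℕ → ℝ → ℝ := fun i l => C i * (exp (-(c * l)) * (c * l) ^ i / i ! * gammaPDFReal α b l)
  have hF_int (i : ℕ) : IntegrableOn (F i) (Ioi 0) :=
    (integrableOn_poisson_mul_gammaPDFReal hα hb hc i).const_mul _
  have hF_integral (i : ℕ) : ∫ l in Ioi 0, F i l =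
      C i * (Gamma (α + i) / (i ! * Gamma α) * (b / (b + c)) ^ α * (c / (b + c)) ^ i) := by
    rw [integral_const_mul, integral_poisson_mul_gammaPDFReal hα hb hc]
  have hF_norm (i : ℕ) : ∫ l in Ioi 0, ‖F i l‖ = ∫ l in Ioi 0, F i l :=
    setIntegral_congr_fun measurableSet_Ioi fun l (hl : 0 < l) => norm_of_nonneg <|
      mul_nonneg (hC i) (mul_nonneg (by positivity) (gammaPDFReal_nonneg hα hb l))
  have hsum := hasSum_integral_of_summable_integral_norm hF_int
    (by simpa only [hF_norm, hF_integral] using hs.summable)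
  simp only [hF_integral] at hsum
  rw [hs.unique hsum]
  congr 1 with l
  rw [← tsum_mul_right]
  exact tsum_congr fun i => by ring

end PoissonGammaMixture

/-- The χ² density with `2 * a` degrees of freedom. -/
noncomputable def chiSqPDF (a h : ℝ) : ℝ := 1 / (2 ^ a * Gamma a) * h ^ (a - 1) * exp (-h / 2)

section ChiSq

variable {a h : ℝ}

lemma chiSqPDF_pos (ha : 0 < a) (hh : 0 < h) : 0 < chiSqPDF a h := by
  have := Gamma_pos_of_pos ha
  unfold chiSqPDF
  positivity

lemma chiSqPDF_add_nat (ha : 0 < a) (hh : 0 < h) (i : ℕ) :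
    chiSqPDF (a + i) h = chiSqPDF a h * ((h / 2) ^ i * Gamma a / Gamma (a + i)) := by
  have hΓ : Gamma a ≠ 0 := (Gamma_pos_of_pos ha).ne'
  rw [chiSqPDF, chiSqPDF, show a + i - 1 = a - 1 + i by ring, rpow_add hh, rpow_add two_pos,
    rpow_natCast, rpow_natCast, div_pow]
  field_simp

lemma chiSqPDF_add_nat_mul_negBinomial (ha : 0 < a) (hh : 0 < h) (p q : ℝ) (i : ℕ) :
    chiSqPDF (a + i) h * (Gamma (a + 1 + i) / (i ! * Gamma (a + 1)) * p ^ (a + 1) * q ^ i) =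
      chiSqPDF a h * p ^ (a + 1) / a * ((a + i) * (q * h / 2) ^ i / i !) := by
  have hai : 0 < a + i := by positivity
  have hΓa : Gamma a ≠ 0 := (Gamma_pos_of_pos ha).ne'
  have hΓai : Gamma (a + i) ≠ 0 := (Gamma_pos_of_pos hai).ne'
  rw [chiSqPDF_add_nat ha hh, add_right_comm, Gamma_add_one hai.ne', Gamma_add_one ha.ne']
  field_simp
  ring

end ChiSq

theorem chi_squared_bayes_factor (k : ℕ) (hk : 0 < k) (τ h : ℝ) (hτ : 0 < τ) (hh : 0 < h)
    (m₀ m₁ : ℝ)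
    (hm₀ : m₀ = 1 / (2^((k:ℝ)/2) * Real.Gamma ((k:ℝ)/2)) * h^((k:ℝ)/2 - 1) * Real.exp (-h/2))
    (hm₁ : m₁ = ∫ l in Set.Ioi (0:ℝ),
      (∑' i : ℕ, Real.exp (-l/2) * (l/2)^i / (Nat.factorial i) *
        h^((k:ℝ)/2 + i - 1) * Real.exp (-h/2) / (2^((k:ℝ)/2 + i) * Real.Gamma ((k:ℝ)/2 + i))) *
      ((1/(2*τ^2))^((k:ℝ)/2 + 1) * l^((k:ℝ)/2) * Real.exp (-(1/(2*τ^2)) * l) /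
        Real.Gamma ((k:ℝ)/2 + 1))) :
    m₁ / m₀ = (τ^2 + 1)^(-(k:ℝ)/2 - 1) * (1 + τ^2 * h / (k * (τ^2 + 1))) *
      Real.exp (τ^2 * h / (2 * (τ^2 + 1))) := by
  rw [show -(k : ℝ) / 2 - 1 = -((k : ℝ) / 2 + 1) by ring, show (k : ℝ) = 2 * ((k : ℝ) / 2) by ring]
  set a : ℝ := (k : ℝ) / 2
  have ha : 0 < a := by positivity
  set t := τ ^ 2
  have ht : 0 < t := by positivity
  have hp : 1 / (2 * t) / (1 / (2 * t) + 1 / 2) = 1 / (t + 1) := by field_simp; ring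
  have hq : 1 / 2 / (1 / (2 * t) + 1 / 2) * h / 2 = t * h / (2 * (t + 1)) := by field_simp; ring
  have hm₁' : m₁ = chiSqPDF a h * (1 / (t + 1)) ^ (a + 1) / a *
      ((a + t * h / (2 * (t + 1))) * exp (t * h / (2 * (t + 1)))) := by
    rw [hm₁, ← integral_tsum_poisson_mul_gammaPDFReal (α := a + 1) (b := 1 / (2 * t))
      (c := 1 / 2) (C := fun i => chiSqPDF (a + i) h) (by positivity) (by positivity)
      (by norm_num) (fun i => (chiSqPDF_pos (by positivity) hh).le)
      (((hasSum_add_mul_pow_div_factorial a _).mul_left _).congr_fun fun i => by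
        rw [chiSqPDF_add_nat_mul_negBinomial ha hh, hp, hq])]
    refine setIntegral_congr_fun measurableSet_Ioi fun l (hl : 0 < l) => ?_
    congr 1
    · refine tsum_congr fun i => ?_
      rw [chiSqPDF, show -l / 2 = -(1 / 2 * l) by ring, show l / 2 = 1 / 2 * l by ring]
      ring
    · rw [gammaPDFReal, if_pos hl.le, add_sub_cancel_right, neg_mul]
      ring
  have hm₀_pos : 0 < chiSqPDF a h := chiSqPDF_pos ha hh
  rw [hm₁', show m₀ = chiSqPDF a h from hm₀, rpow_neg (by positivity), ← inv_rpow (by positivity),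
    ← one_div]
  field_simp
end
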